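/- Let A ⊆ M_N(o_r) be the preimage of a parabolic subalgebra of M_N(F_q) under reduction mod p, let P be the preimage of its nilpotent radical, and let e be the length of the defining flag. Then p·A = A·p = P^e. -/

import Mathlib

open IsLocalRing

/-- Reduction mod the maximal ideal, `𝔬/𝔭^r → 𝔬/𝔭`. -/
noncomputable def resRed (o : Type) [CommRing o] [IsLocalRing o] (r : ℕ) (hr : r ≠ 0) :
    (o ⧸ (maximalIdeal o) ^ r) →+* ResidueField o :=
  Ideal.Quotient.lift _ (IsLocalRing.residue o) fun a ha =>
    Ideal.Quotient.eq_zero_iff_mem.mpr (Ideal.pow_le_self hr ha)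

/-!
Choose a basis `B` of `k^N` adapted to the flag, the vector `B i` entering at level `bl i < e`,
and lift the change-of-basis matrix to an invertible matrix `g` over `𝔬_r`. Conjugation by `g`
turns `A` and `P` into `L 0` and `L 1`, where `L t = stairSubmodule ϖ bl e t` consists of the
matrices whose `(i, j)` entry is divisible by `ϖ ^ ⌈(t + bl i - bl j) / e⌉`. Subadditivity of the
ceiling gives `L s * L t ≤ L (s + t)`, and `L (t + e) = ϖ • L t`. Conversely, since the flag is
strict every level is occupied, so a matrix unit in `L t` is a product of `t` matrix units in
`L 1`, passing through indices of levels `bl i + 1, bl i + 2, …` (mod `e`) and picking up a factor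
`ϖ` at each wrap-around. Hence `P ^ e = L 1 ^ e = L e = ϖ • L 0 = ϖ • A`, and `ϖ` is central.
-/

open Submodule Module
open scoped Pointwise

section AdaptedBasis

variable {k V : Type*} [Field k] [AddCommGroup V] [Module k V]

theorem exists_linearIndepOn_adapted {F : ℕ → Submodule k V} (hF : Monotone F) (n : ℕ) :
    ∃ s ⊆ (F n : Set V), LinearIndepOn k id s ∧ ∀ t ≤ n, F t ≤ span k (s ∩ F t) := by
  induction n with
  | zero =>
    obtain ⟨s, hsF, -, hFs, hs⟩ :=
      exists_linearIndepOn_id_extension (linearIndepOn_empty k id) (Set.empty_subset (F 0 : Set V))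
    refine ⟨s, hsF, hs, fun t ht => ?_⟩
    rw [Nat.le_zero.mp ht, Set.inter_eq_left.mpr hsF]
    exact SetLike.coe_subset_coe.mp hFs
  | succ n ih =>
    obtain ⟨s, hsF, hs, hspan⟩ := ih
    obtain ⟨b, hbF, hsb, hFb, hb⟩ :=
      exists_linearIndepOn_id_extension hs (hsF.trans (hF n.le_succ))
    refine ⟨b, hbF, hb, fun t ht => ?_⟩
    rcases Nat.of_le_succ ht with ht | rfl
    · exact (hspan t ht).trans (span_mono (Set.inter_subset_inter_left _ hsb))
    · rw [Set.inter_eq_left.mpr hbF]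
      exact SetLike.coe_subset_coe.mp hFb

theorem Monotone.exists_forall_mem_iff_lt {F : ℕ → Submodule k V} (hF : Monotone F)
    (hbot : F 0 = ⊥) {x : V} (hx : x ≠ 0) {n : ℕ} (hxn : x ∈ F n) :
    ∃ l < n, ∀ t, x ∈ F t ↔ l < t := by
  classical
  have hex : ∃ t, x ∈ F t := ⟨n, hxn⟩
  have hfind : ∀ t, Nat.find hex ≤ t ↔ x ∈ F t := fun t =>
    (Nat.find_le_iff _ t).trans ⟨fun ⟨m, hmt, hm⟩ => hF hmt hm, fun h => ⟨t, le_rfl, h⟩⟩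
  have hpos : Nat.find hex ≠ 0 := fun h0 => hx <| by
    simpa [hbot] using (hfind 0).mp h0.le
  refine ⟨Nat.find hex - 1, ?_, fun t => ?_⟩
  · have := (hfind n).mpr hxn
    omega
  · rw [← hfind]
    omega

/-- The basis `b₀` only fixes the index type. -/
theorem exists_basis_adapted_of_monotone {ι : Type*} (b₀ : Basis ι k V)
    {F : ℕ → Submodule k V} (hF : Monotone F) (hbot : F 0 = ⊥) {n : ℕ} (htop : F n = ⊤) :
    ∃ (B : Basis ι k V) (bl : ι → ℕ), (∀ i, bl i < n) ∧
      ∀ t ≤ n, F t = span k (B '' {i | bl i < t}) := by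
  obtain ⟨s, -, hs, hspan⟩ := exists_linearIndepOn_adapted hF n
  have hspan_s : ⊤ ≤ span k (Set.range ((↑) : s → V)) := by
    rw [Subtype.range_coe, ← htop]
    exact (hspan n le_rfl).trans (span_mono Set.inter_subset_left)
  set B₁ : Basis s k V := Basis.mk hs hspan_s
  have hB₁ (x : s) : B₁ x = x := Basis.mk_apply _ _ _
  have hlevel (x : s) : ∃ l < n, ∀ t, (x : V) ∈ F t ↔ l < t :=
    hF.exists_forall_mem_iff_lt hbot (hB₁ x ▸ B₁.ne_zero x) (by simp [htop])
  choose bl₁ hbl₁ hmem using hlevel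
  set σ := B₁.indexEquiv b₀
  refine ⟨B₁.reindex σ, bl₁ ∘ σ.symm, fun i => hbl₁ _, fun t ht => ?_⟩
  have himage : (B₁.reindex σ) '' {i | bl₁ (σ.symm i) < t} = s ∩ F t := by
    ext v
    simp only [Basis.reindex_apply, hB₁, Set.mem_image, Set.mem_ofPred_eq,
      Set.mem_inter_iff, SetLike.mem_coe]
    constructor
    · rintro ⟨i, hi, rfl⟩
      exact ⟨(σ.symm i).2, (hmem _ t).mpr hi⟩
    · rintro ⟨hv, hvt⟩
      exact ⟨σ ⟨v, hv⟩, by simpa using (hmem ⟨v, hv⟩ t).mp hvt, by simp⟩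
  rw [Function.comp_def, himage]
  exact le_antisymm (hspan t ht) (span_le.mpr Set.inter_subset_right)

theorem exists_basis_adapted_to_flag {ι : Type*} (b₀ : Basis ι k V) {e : ℕ}
    {flag : Fin (e + 1) → Submodule k V} (hmono : Monotone flag) (hbot : flag 0 = ⊥)
    (htop : flag (Fin.last e) = ⊤) :
    ∃ (B : Basis ι k V) (bl : ι → ℕ), (∀ i, bl i < e) ∧
      ∀ t, flag t = span k (B '' {i | bl i < (t : ℕ)}) := by
  set F : ℕ → Submodule k V := fun t => flag ⟨min t e, by omega⟩
  have hF : Monotone F := fun a b hab => hmono (Fin.mk_le_mk.mpr (min_le_min_right e hab))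
  obtain ⟨B, bl, hbl, hflag⟩ :=
    exists_basis_adapted_of_monotone b₀ hF (by simpa [F] using hbot) (n := e)
      (by simpa [F, Fin.last] using htop)
  refine ⟨B, bl, hbl, fun t => ?_⟩
  rw [← hflag t (Nat.lt_succ_iff.mp t.2)]
  simp only [F, Nat.min_eq_left (Nat.lt_succ_iff.mp t.2)]

theorem exists_level_eq_of_strictMono {ι : Type*} {B : Basis ι k V} {e : ℕ} {bl : ι → ℕ}
    {flag : Fin (e + 1) → Submodule k V} (hmono : StrictMono flag)
    (hflag : ∀ t, flag t = span k (B '' {i | bl i < (t : ℕ)})) {u : ℕ} (hu : u < e) :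
    ∃ i, bl i = u := by
  by_contra! h
  have hlevels : {i | bl i < u} = {i | bl i < u + 1} := by
    ext i
    have := h i
    simp only [Set.mem_ofPred_eq]
    omega
  have hlt : (⟨u, by omega⟩ : Fin (e + 1)) < ⟨u + 1, by omega⟩ := Fin.mk_lt_mk.mpr u.lt_succ_self
  exact (hmono hlt).ne (by rw [hflag, hflag]; simp only [hlevels])

end AdaptedBasis

section StairExponent

variable {ι : Type*} (bl : ι → ℕ) (e : ℕ)

/-- `⌈(t + bl i - bl j) / e⌉`; the truncated subtraction is harmless once all levels are `< e`. -/
def stairExp (t : ℕ) (i j : ι) : ℕ := (bl i + t + (e - 1) - bl j) / e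

variable {bl e} (hbl : ∀ i, bl i < e)
include hbl

theorem stairExp_le_add (s t : ℕ) (i l j : ι) :
    stairExp bl e (s + t) i j ≤ stairExp bl e s i l + stairExp bl e t l j := by
  have := hbl i; have := hbl l; have := hbl j
  have he : 0 < e := by omega
  unfold stairExp
  rw [← Nat.lt_succ_iff, Nat.div_lt_iff_lt_mul he, Nat.succ_mul, Nat.add_mul]
  have := Nat.div_add_mod (bl i + s + (e - 1) - bl l) e
  have := Nat.div_add_mod (bl l + t + (e - 1) - bl j) e
  have := Nat.mod_lt (bl i + s + (e - 1) - bl l) he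
  have := Nat.mod_lt (bl l + t + (e - 1) - bl j) he
  rw [mul_comm _ e, mul_comm _ e]
  omega

theorem stairExp_add_self (t : ℕ) (i j : ι) :
    stairExp bl e (t + e) i j = stairExp bl e t i j + 1 := by
  have := hbl j
  unfold stairExp
  rw [← Nat.add_div_right _ (by omega)]
  congr 1
  omega

theorem stairExp_of_le_one {d : ℕ} (hd : d ≤ 1) (i j : ι) :
    stairExp bl e d i j = if bl j < bl i + d then 1 else 0 := by
  have := hbl i; have := hbl j
  unfold stairExp
  split_ifs
  · exact Nat.div_eq_of_lt_le (by omega) (by omega)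
  · exact Nat.div_eq_of_lt (by omega)

theorem stairExp_succ {i m : ι} (hm : bl m = (bl i + 1) % e) (t : ℕ) (j : ι) :
    stairExp bl e (t + 1) i j = stairExp bl e 1 i m + stairExp bl e t m j := by
  have := hbl i; have := hbl j
  unfold stairExp
  rcases Nat.lt_or_ge (bl i + 1) e with h | h
  · rw [Nat.mod_eq_of_lt h] at hm
    have h1 : (bl i + 1 + (e - 1) - bl m) / e = 0 := Nat.div_eq_of_lt (by omega)
    rw [h1, zero_add]
    congr 1; omega
  · rw [show bl i + 1 = e by omega, Nat.mod_self] at hm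
    have h1 : (bl i + 1 + (e - 1) - bl m) / e = 1 := Nat.div_eq_of_lt_le (by omega) (by omega)
    rw [h1, add_comm 1, ← Nat.add_div_right _ (by omega)]
    congr 1; omega

end StairExponent

section StairSubmodule

variable {R ι : Type*} [CommRing R] (ϖ : R) (bl : ι → ℕ) (e : ℕ)

def stairSubmodule (t : ℕ) : Submodule R (Matrix ι ι R) where
  carrier := {c | ∀ i j, ϖ ^ stairExp bl e t i j ∣ c i j}
  add_mem' ha hb i j := dvd_add (ha i j) (hb i j)
  zero_mem' _ _ := dvd_zero _
  smul_mem' r _ hc i j := (hc i j).mul_left r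

variable {ϖ bl e}

theorem mem_stairSubmodule {t : ℕ} {c : Matrix ι ι R} :
    c ∈ stairSubmodule ϖ bl e t ↔ ∀ i j, ϖ ^ stairExp bl e t i j ∣ c i j := Iff.rfl

variable [DecidableEq ι]

theorem single_mem_stairSubmodule {t : ℕ} {i j : ι} {z : R} (hz : ϖ ^ stairExp bl e t i j ∣ z) :
    Matrix.single i j z ∈ stairSubmodule ϖ bl e t := by
  intro a b
  rw [Matrix.single_apply]
  split_ifs with h
  · exact h.1 ▸ h.2 ▸ hz
  · exact dvd_zero _

variable [Fintype ι] (hbl : ∀ i, bl i < e)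
include hbl

theorem stairSubmodule_mul_le (s t : ℕ) :
    stairSubmodule ϖ bl e s * stairSubmodule ϖ bl e t ≤ stairSubmodule ϖ bl e (s + t) := by
  refine mul_le.mpr fun c hc d hd i j => Finset.dvd_sum fun l _ => ?_
  exact (pow_dvd_pow ϖ (stairExp_le_add hbl s t i l j)).trans
    (pow_add ϖ _ _ ▸ mul_dvd_mul (hc i l) (hd l j))

theorem stairSubmodule_one_pow_le (t : ℕ) :
    stairSubmodule ϖ bl e 1 ^ t ≤ stairSubmodule ϖ bl e t := by
  induction t with
  | zero =>
    refine one_le.mpr fun i j => ?_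
    rw [Matrix.one_apply]
    split_ifs with h
    · simp [h, stairExp_of_le_one hbl zero_le_one]
    · exact dvd_zero _
  | succ t ih =>
    rw [pow_succ]
    exact (mul_le_mul' ih le_rfl).trans (stairSubmodule_mul_le hbl t 1)

theorem single_mem_stairSubmodule_one_pow (hsurj : ∀ u < e, ∃ i, bl i = u) {t : ℕ} (ht : 1 ≤ t)
    {i j : ι} {z : R} (hz : ϖ ^ stairExp bl e t i j ∣ z) :
    Matrix.single i j z ∈ stairSubmodule ϖ bl e 1 ^ t := by
  induction t, ht using Nat.le_induction generalizing i z with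
  | base => simpa using single_mem_stairSubmodule hz
  | succ t _ ih =>
    obtain ⟨m, hm⟩ := hsurj ((bl i + 1) % e) (Nat.mod_lt _ (Nat.zero_lt_of_lt (hbl i)))
    obtain ⟨w, rfl⟩ := hz
    rw [stairExp_succ hbl hm, pow_add ϖ, mul_assoc, ← Matrix.single_mul_single_same _ i m j,
      pow_succ' (stairSubmodule ϖ bl e 1)]
    exact mul_mem_mul (single_mem_stairSubmodule dvd_rfl) (ih (dvd_mul_right _ _))

theorem stairSubmodule_le_stairSubmodule_one_pow (hsurj : ∀ u < e, ∃ i, bl i = u) {t : ℕ}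
    (ht : 1 ≤ t) : stairSubmodule ϖ bl e t ≤ stairSubmodule ϖ bl e 1 ^ t := fun c hc => by
  rw [Matrix.matrix_eq_sum_single c]
  exact sum_mem fun i _ => sum_mem fun j _ =>
    single_mem_stairSubmodule_one_pow hbl hsurj ht (hc i j)

theorem stairSubmodule_add_self (t : ℕ) :
    stairSubmodule ϖ bl e (t + e) = ϖ • stairSubmodule ϖ bl e t := by
  ext c
  simp only [mem_smul_pointwise_iff_exists, mem_stairSubmodule, stairExp_add_self hbl, pow_succ']
  constructor
  · intro hc
    choose w hw using hc
    refine ⟨Matrix.of fun i j => ϖ ^ stairExp bl e t i j * w i j, fun i j => dvd_mul_right _ _, ?_⟩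
    ext i j
    simp [hw, mul_assoc]
  · rintro ⟨d, hd, rfl⟩ i j
    exact mul_dvd_mul_left ϖ (hd i j)

theorem stairSubmodule_one_pow_eq (hsurj : ∀ u < e, ∃ i, bl i = u) (he : 1 ≤ e) :
    stairSubmodule ϖ bl e 1 ^ e = ϖ • stairSubmodule ϖ bl e 0 := by
  rw [← stairSubmodule_add_self hbl, zero_add]
  exact le_antisymm (stairSubmodule_one_pow_le hbl e)
    (stairSubmodule_le_stairSubmodule_one_pow hbl hsurj he)

theorem mem_stairSubmodule_iff_of_le_one {k : Type*} [Semiring k] {ρ : R →+* k}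
    (hϖ : RingHom.ker ρ = Ideal.span {ϖ}) {d : ℕ} (hd : d ≤ 1) {c : Matrix ι ι R} :
    c ∈ stairSubmodule ϖ bl e d ↔ ∀ i j, bl j < bl i + d → ρ.mapMatrix c i j = 0 := by
  simp only [mem_stairSubmodule, stairExp_of_le_one hbl hd]
  refine forall₂_congr fun i j => ?_
  split_ifs with h <;> simp [h, ← RingHom.mem_ker, hϖ, Ideal.mem_span_singleton]

end StairSubmodule

section FlagMatrices

theorem Module.Basis.span_image_le_comap_span_image_iff {R M ι : Type*} [Semiring R]
    [AddCommMonoid M] [Module R M] (B : Basis ι R M) (f : M →ₗ[R] M) (s s' : Set ι) :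
    span R (B '' s) ≤ (span R (B '' s')).comap f ↔ ∀ j ∈ s, ∀ i ∉ s', B.repr (f (B j)) i = 0 := by
  rw [span_le, Set.image_subset_iff]
  refine forall₂_congr fun j _ => ?_
  rw [Set.mem_preimage, SetLike.mem_coe, mem_comap, B.mem_span_image, Finsupp.support_subset_iff]

variable {R M ι : Type*} [Semiring R] [AddCommMonoid M] [Module R M] {B : Basis ι R M} {e : ℕ}
  {bl : ι → ℕ} {flag : Fin (e + 1) → Submodule R M}
  (hflag : ∀ t, flag t = span R (B '' {i | bl i < (t : ℕ)})) (hbl : ∀ i, bl i < e)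
include hflag hbl

theorem forall_mapsTo_flag_iff (f : M →ₗ[R] M) :
    (∀ t v, v ∈ flag t → f v ∈ flag t) ↔ ∀ i j, bl j < bl i → B.repr (f (B j)) i = 0 := by
  change (∀ t, flag t ≤ (flag t).comap f) ↔ _
  simp only [hflag, B.span_image_le_comap_span_image_iff, Set.mem_ofPred_eq, not_lt]
  constructor
  · intro h i j hij
    exact h ⟨bl i, by have := hbl i; omega⟩ j hij i le_rfl
  · intro h t j hj i hi
    exact h i j (hj.trans_le hi)

theorem forall_mapsTo_flag_succ_castSucc_iff (f : M →ₗ[R] M) :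
    (∀ (t : Fin e) v, v ∈ flag t.succ → f v ∈ flag t.castSucc) ↔
      ∀ i j, bl j < bl i + 1 → B.repr (f (B j)) i = 0 := by
  change (∀ t : Fin e, flag t.succ ≤ (flag t.castSucc).comap f) ↔ _
  simp only [hflag, B.span_image_le_comap_span_image_iff, Set.mem_ofPred_eq, not_lt,
    Fin.val_succ, Fin.val_castSucc]
  constructor
  · intro h i j hij
    exact h ⟨bl i, hbl i⟩ j hij i le_rfl
  · intro h t j hj i hi
    exact h i j (by omega)

end FlagMatrices

section Conjugation

variable {R k n : Type*} [CommRing R] [Field k] [Fintype n] [DecidableEq n] (ρ : R →+* k)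

theorem exists_units_mapMatrix_eq [IsLocalHom ρ] (hρ : Function.Surjective ρ)
    {M : Matrix n n k} (hM : IsUnit M) : ∃ g : (Matrix n n R)ˣ, ρ.mapMatrix g = M := by
  have hlift : ρ.mapMatrix (M.map (Function.surjInv hρ)) = M := by
    ext i j
    exact Function.surjInv_eq hρ _
  have hdet : IsUnit (M.map (Function.surjInv hρ)).det := by
    refine isUnit_of_map_unit ρ _ ?_
    rw [RingHom.map_det, hlift]
    exact (Matrix.isUnit_iff_isUnit_det M).mp hM
  exact ⟨((Matrix.isUnit_iff_isUnit_det _).mpr hdet).unit, hlift⟩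

theorem mapMatrix_conj_eq_toMatrix (B : Basis n k (n → k)) {g : (Matrix n n R)ˣ}
    (hg : ρ.mapMatrix g = (Pi.basisFun k n).toMatrix B) (x : Matrix n n R) :
    ρ.mapMatrix (((g⁻¹ : (Matrix n n R)ˣ) : Matrix n n R) * x * (g : Matrix n n R)) =
      LinearMap.toMatrix B B (Matrix.toLin' (ρ.mapMatrix x)) := by
  have hginv : ρ.mapMatrix ↑(g⁻¹) = B.toMatrix (Pi.basisFun k n) :=
    calc ρ.mapMatrix ↑(g⁻¹)
        = ρ.mapMatrix ↑(g⁻¹) * (ρ.mapMatrix g * B.toMatrix (Pi.basisFun k n)) := by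
          rw [hg, Basis.toMatrix_mul_toMatrix_flip, mul_one]
      _ = B.toMatrix (Pi.basisFun k n) := by
          rw [← mul_assoc, ← map_mul, Units.inv_mul, map_one, one_mul]
  rw [map_mul, map_mul, hginv, hg, ← basis_toMatrix_mul_linearMap_toMatrix_mul_basis_toMatrix B
    (Pi.basisFun k n) B (Pi.basisFun k n), LinearMap.toMatrix_eq_toMatrix',
    LinearMap.toMatrix'_toLin']

end Conjugation

theorem smul_parahoric_eq_radical_pow {R k n : Type*} [CommRing R] [Field k] [Fintype n]
    [DecidableEq n] (ρ : R →+* k) [IsLocalHom ρ] (hρ : Function.Surjective ρ) {ϖ : R}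
    (hϖ : RingHom.ker ρ = Ideal.span {ϖ}) {e : ℕ} (he : 1 ≤ e)
    {flag : Fin (e + 1) → Submodule k (n → k)} (hmono : StrictMono flag) (hbot : flag 0 = ⊥)
    (htop : flag (Fin.last e) = ⊤) {A P : Submodule R (Matrix n n R)}
    (hA : ∀ x, x ∈ A ↔ ∀ (t : Fin (e + 1)) v, v ∈ flag t → (ρ.mapMatrix x).mulVec v ∈ flag t)
    (hP : ∀ x, x ∈ P ↔ ∀ (t : Fin e) v, v ∈ flag t.succ →
      (ρ.mapMatrix x).mulVec v ∈ flag t.castSucc) :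
    ϖ • A = P ^ e := by
  obtain ⟨B, bl, hbl, hflag⟩ :=
    exists_basis_adapted_to_flag (Pi.basisFun k n) hmono.monotone hbot htop
  have hsurj : ∀ u < e, ∃ i, bl i = u := fun u hu => exists_level_eq_of_strictMono hmono hflag hu
  have := (Pi.basisFun k n).invertibleToMatrix B
  obtain ⟨g, hg⟩ := exists_units_mapMatrix_eq ρ hρ
    (isUnit_of_invertible ((Pi.basisFun k n).toMatrix B))
  set φ := MulSemiringAction.toAlgEquiv R (Matrix n n R) (ConjAct.toConjAct g⁻¹)
  have hφ (x : Matrix n n R) :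
      ρ.mapMatrix (φ x) = LinearMap.toMatrix B B (Matrix.toLin' (ρ.mapMatrix x)) := by
    rw [← mapMatrix_conj_eq_toMatrix ρ B hg]
    simp only [φ, MulSemiringAction.toAlgEquiv_apply, ConjAct.units_smul_def,
      ConjAct.ofConjAct_toConjAct, inv_inv]
  have hAφ : A = (stairSubmodule ϖ bl e 0).comap φ.toLinearMap := by
    ext x
    rw [hA, mem_comap, AlgEquiv.toLinearMap_apply,
      mem_stairSubmodule_iff_of_le_one hbl hϖ zero_le_one]
    simpa [hφ, LinearMap.toMatrix_apply] using
      forall_mapsTo_flag_iff hflag hbl (Matrix.toLin' (ρ.mapMatrix x))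
  have hPφ : P = (stairSubmodule ϖ bl e 1).comap φ.toLinearMap := by
    ext x
    rw [hP, mem_comap, AlgEquiv.toLinearMap_apply,
      mem_stairSubmodule_iff_of_le_one hbl hϖ le_rfl]
    simpa [hφ, LinearMap.toMatrix_apply] using
      forall_mapsTo_flag_succ_castSucc_iff hflag hbl (Matrix.toLin' (ρ.mapMatrix x))
  apply map_injective_of_injective (f := φ.toAlgHom.toLinearMap) φ.injective
  rw [map_pointwise_smul, Submodule.map_pow, AlgEquiv.toAlgHom_toLinearMap, hAφ, hPφ,
    map_comap_eq_of_surjective φ.surjective, map_comap_eq_of_surjective φ.surjective,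
    stairSubmodule_one_pow_eq hbl hsurj he]

section Reduction

variable (o : Type) [CommRing o] [IsLocalRing o] (r : ℕ) (hr : r ≠ 0)

instance isLocalHom_resRed : IsLocalHom (resRed o r hr) where
  map_nonunit x hx := by
    obtain ⟨a, rfl⟩ := Ideal.Quotient.mk_surjective x
    exact (isUnit_of_map_unit (residue o) a hx).map _

theorem resRed_surjective : Function.Surjective (resRed o r hr) :=
  Ideal.Quotient.lift_surjective_of_surjective _ _ residue_surjective

theorem ker_resRed :
    RingHom.ker (resRed o r hr) = (maximalIdeal o).map (Ideal.Quotient.mk (maximalIdeal o ^ r)) :=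
  (Ideal.ker_quotient_lift (residue o) _).trans (by rw [ker_residue])

end Reduction

/-- Let `A ⊆ M_N(𝔬_r)` be the preimage of the parabolic subalgebra of `M_N(F_q)`
stabilising a (strict, complete) flag of length `e`, and `P` the preimage of its
nilpotent radical.  Then `𝔭·A = A·𝔭 = P^e`. -/
theorem parahoric_radical_power
    (o : Type) [CommRing o] [IsDomain o] [IsDiscreteValuationRing o]
    (N r : ℕ) (hr : 2 ≤ r)
    (e : ℕ) (he : 1 ≤ e)
    (flag : Fin (e + 1) → Submodule (ResidueField o) (Fin N → ResidueField o))
    (hmono : StrictMono flag) (hbot : flag 0 = ⊥) (htop : flag (Fin.last e) = ⊤)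
    (A P : Submodule (o ⧸ (maximalIdeal o) ^ r)
      (Matrix (Fin N) (Fin N) (o ⧸ (maximalIdeal o) ^ r)))
    (hA : ∀ x, x ∈ A ↔ ∀ (t : Fin (e + 1)) (v : Fin N → ResidueField o), v ∈ flag t →
      ((resRed o r (by omega)).mapMatrix x).mulVec v ∈ flag t)
    (hP : ∀ x, x ∈ P ↔ ∀ (t : Fin e) (v : Fin N → ResidueField o), v ∈ flag t.succ →
      ((resRed o r (by omega)).mapMatrix x).mulVec v ∈ flag t.castSucc) :
    ((maximalIdeal o).map (Ideal.Quotient.mk ((maximalIdeal o) ^ r))) • A = P ^ e ∧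
    A * (((maximalIdeal o).map (Ideal.Quotient.mk ((maximalIdeal o) ^ r))) •
      (1 : Submodule (o ⧸ (maximalIdeal o) ^ r)
        (Matrix (Fin N) (Fin N) (o ⧸ (maximalIdeal o) ^ r)))) = P ^ e := by
  obtain ⟨π, hπ⟩ := IsDiscreteValuationRing.exists_irreducible o
  have hI : (maximalIdeal o).map (Ideal.Quotient.mk (maximalIdeal o ^ r)) =
      Ideal.span {Ideal.Quotient.mk _ π} := by
    rw [(IsDiscreteValuationRing.irreducible_iff_uniformizer π).mp hπ, Ideal.map_span,
      Set.image_singleton]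
  have hr0 : r ≠ 0 := by omega
  have key := smul_parahoric_eq_radical_pow (resRed o r hr0) (resRed_surjective o r hr0)
    ((ker_resRed o r hr0).trans hI) he hmono hbot htop hA hP
  rw [hI, ideal_span_singleton_smul, ideal_span_singleton_smul, mul_smul_one]
  exact ⟨key, key⟩
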